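/- Let P_g(α) = Π_{i=1}^{g} (α − (−1)^{i+1}(2i−1)) ∈ ℂ[α]. With r_g as defined by the recursion r₀=1, r₁=ω+δ/2−1, r₂=((ω+δ/2)²−β)/2+ω−δ/2−1/2, g·r_g = (ω+δ/2+(−1)^g(2g−1))r_{g−1} + (1−g)(β+(−1)^g 2δ−2)r_{g−2} − (γ/2)r_{g−3}: the image of r_g under the homomorphism ℂ[ω,β,γ,δ] → ℂ[α] sending ω ↦ α, β ↦ 2, γ ↦ 0, δ ↦ 0 equals P_g(α)/g! ; in particular r_g specializes to a polynomial in α of degree g with roots exactly α = (−1)^{i+1}(2i−1), i = 1,…,g. -/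

import Mathlib

/-!
Under `ω ↦ α, β ↦ 2, γ ↦ 0, δ ↦ 0` the coefficient `β + (−1)^g 2δ − 2` of `r_{g−2}` and the
coefficient `γ/2` of `r_{g−3}` both vanish, so the three-term recursion collapses to the
first-order recursion for the images `s_g` of `r_g`, `g·s_g = (α + (−1)^g(2g−1))·s_{g−1}`,
which also holds for `g = 1, 2` by direct computation.
Unrolling it from `s_0 = 1` gives `s_g = P_g(α)/g!`.
-/

open MvPolynomial Finset

theorem eq_inv_factorial_smul_prod_of_succ_smul {K A : Type*} [Field K] [CharZero K]
    [CommSemiring A] [Algebra K A] {p f : ℕ → A} (h0 : p 0 = 1)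
    (hsucc : ∀ n, ((n + 1 : ℕ) : K) • p (n + 1) = f n * p n) (n : ℕ) :
    p n = ((n.factorial : K))⁻¹ • ∏ i ∈ range n, f i := by
  induction n with
  | zero => simp [h0]
  | succ n ih =>
    have hn : ((n + 1 : ℕ) : K) ≠ 0 := Nat.cast_ne_zero.mpr n.succ_ne_zero
    rw [← inv_smul_smul₀ hn (p (n + 1)), hsucc, ih, mul_smul_comm, smul_smul, prod_range_succ,
      Nat.factorial_succ, Nat.cast_mul, mul_inv, mul_comm (f n)]

theorem stmt17 (r : ℕ → MvPolynomial (Fin 4) ℂ)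
    (h0 : r 0 = 1)
    (h1 : r 1 = X 0 + (2:ℂ)⁻¹ • X 3 - 1)
    (h2 : r 2 = (2:ℂ)⁻¹ • ((X 0 + (2:ℂ)⁻¹ • X 3) ^ 2 - X 1)
          + X 0 - (2:ℂ)⁻¹ • X 3 - C ((2:ℂ)⁻¹))
    (hrec : ∀ g : ℕ, 3 ≤ g →
      (g : ℂ) • r g
        = (X 0 + (2:ℂ)⁻¹ • X 3 + C ((-1 : ℂ) ^ g * (2 * (g : ℂ) - 1))) * r (g - 1)
          + C (1 - (g : ℂ)) *
              ((X 1 + C ((-1 : ℂ) ^ g * 2) * X 3 - 2) * r (g - 2))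
          - (2:ℂ)⁻¹ • (X 2 * r (g - 3))) :
    ∀ g : ℕ,
      MvPolynomial.aeval ![Polynomial.X, 2, 0, 0] (r g)
        = ((g.factorial : ℂ))⁻¹ •
            ∏ i ∈ Finset.range g,
              (Polynomial.X - Polynomial.C ((-1 : ℂ) ^ i * (2 * (i : ℂ) + 1))) := by
  set φ := MvPolynomial.aeval (R := ℂ) ![(Polynomial.X : Polynomial ℂ), 2, 0, 0]
  have hsucc : ∀ n : ℕ, ((n + 1 : ℕ) : ℂ) • φ (r (n + 1))
      = (Polynomial.X - Polynomial.C ((-1 : ℂ) ^ n * (2 * n + 1))) * φ (r n) := by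
    intro n
    apply Polynomial.funext
    intro x
    match n with
    | 0 => simp [φ, h0, h1]
    | 1 =>
      simp only [φ, h1, h2, map_sub, map_add, map_smul, map_pow, map_one, aeval_X, algHom_C,
        Polynomial.algebraMap_eq, Polynomial.eval_smul, Polynomial.eval_sub, Polynomial.eval_add,
        Polynomial.eval_mul, Polynomial.eval_pow, Polynomial.eval_X, Polynomial.eval_C,
        Polynomial.eval_ofNat, Polynomial.eval_one, Polynomial.eval_zero, Matrix.cons_val_zero,
        Matrix.cons_val_one, Matrix.cons_val, smul_zero, smul_eq_mul]
      push_cast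
      ring
    | n + 2 =>
      have hrec_x := congrArg (fun p => (φ p).eval x) (hrec (n + 3) (by omega))
      simp only [φ, map_sub, map_add, map_mul, map_smul, aeval_X, algHom_C, aeval_ofNat,
        Polynomial.algebraMap_eq, Polynomial.eval_smul, Polynomial.eval_sub, Polynomial.eval_add,
        Polynomial.eval_mul, Polynomial.eval_X, Polynomial.eval_C, Matrix.cons_val_zero,
        Matrix.cons_val_one, Matrix.cons_val, smul_zero, smul_eq_mul, mul_zero, zero_mul, sub_self,
        add_zero, sub_zero, Nat.add_sub_cancel] at hrec_x ⊢
      push_cast at hrec_x ⊢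
      linear_combination hrec_x
  exact eq_inv_factorial_smul_prod_of_succ_smul (by simp [φ, h0]) hsucc
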